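/- Extremal sparsity of integrate-and-fire (discrete case): for every f ∈ ℝ^{N+1} and θ > 0, the spike train s = IF_θ(f) (the β = 1 LIF output) attains the minimal ℓ¹ norm among all sequences s* with entries in θℤ satisfying ‖f - s*‖_A < θ, i.e., ‖IF_θ(f)‖_1 = min{‖s*‖_1 : s* ∈ (θℤ)^{N+1}, ‖f - s*‖_A < θ}. -/

import Mathlib

/-- Truncation quantization toward zero to multiples of `θ`. -/
noncomputable def q (θ z : ℝ) : ℝ := Real.sign z * (θ * (⌊|z| / θ⌋ : ℤ))

/-- Discrete weighted Alexiewicz norm on `ℝ^{N+1}`. -/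
noncomputable def anorm (β : ℝ) (N : ℕ) (f : ℕ → ℝ) : ℝ :=
  Finset.sup' (Finset.range (N + 1)) (by simp)
    (fun n => |∑ k ∈ Finset.range (n + 1), β ^ (n - k) * f k|)

/-- Membrane potential of the discrete LIF recursion with subtraction reset;
the spike output at step `n` is `q θ (lifZ θ β f n)`. -/
noncomputable def lifZ (θ β : ℝ) (f : ℕ → ℝ) : ℕ → ℝ
  | 0 => f 0
  | k + 1 => f (k + 1) + β * (lifZ θ β f k - q θ (lifZ θ β f k))

/-!
Write `F n`, `S n`, `T n` for the partial sums of the input, of the IF spikes `s = IF_θ(f)` and of a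
competitor `t ∈ (θℤ)^{N+1}` with `‖f - t‖_A < θ`. The membrane potential is `z n = F n - S n`, and
`s n = q θ (z n)`. Since `T (n+1) - S n` is a multiple of `θ` within `θ` of `z n`, the truncation
`q θ (z n)` lies between `0` and `T (n+1) - S n`, so emitting it never moves the spike count off a
shortest path to `T (n+1)`. This gives the invariant
`∑_{k<n} |s k| + |T n - S n| ≤ ∑_{k<n} |t k|`, whose case `n = N + 1` is minimality.
-/

open Finset AddSubgroup

lemma mem_zmultiples_iff_exists_mul {θ c : ℝ} : c ∈ zmultiples θ ↔ ∃ m : ℤ, c = θ * m := by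
  simp only [mem_zmultiples_iff, zsmul_eq_mul, mul_comm, eq_comm]

lemma q_of_nonneg (θ : ℝ) {z : ℝ} (hz : 0 ≤ z) : q θ z = ⌊z / θ⌋ * θ := by
  rcases hz.eq_or_lt with rfl | hpos
  · simp [q]
  · rw [q, Real.sign_of_pos hpos, abs_of_nonneg hz, one_mul, mul_comm]

lemma q_neg (θ z : ℝ) : q θ (-z) = -q θ z := by
  simp only [q, Real.sign_neg, abs_neg, neg_mul]

lemma q_mem_zmultiples (θ z : ℝ) : q θ z ∈ zmultiples θ := by
  wlog hz : 0 ≤ z generalizing z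
  · simpa [q_neg] using neg_mem (this (-z) (by linarith))
  rw [q_of_nonneg θ hz]
  exact intCast_mul_mem_zmultiples θ _

lemma abs_sub_q_lt {θ : ℝ} (hθ : 0 < θ) (z : ℝ) : |z - q θ z| < θ := by
  wlog hz : 0 ≤ z generalizing z
  · have := this (-z) (by linarith)
    rwa [q_neg, neg_sub_neg, abs_sub_comm] at this
  rw [q_of_nonneg θ hz, abs_lt]
  constructor
  · linarith [Int.sub_floor_div_mul_nonneg z hθ]
  · exact Int.sub_floor_div_mul_lt z hθ

lemma q_mem_Icc_of_abs_sub_lt {θ z c : ℝ} (hθ : 0 < θ) (hz : 0 ≤ z) (hc : c ∈ zmultiples θ)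
    (hzc : |z - c| < θ) : q θ z ∈ Set.Icc 0 c := by
  obtain ⟨b, rfl⟩ := mem_zmultiples_iff_exists_mul.1 hc
  have hzb : z / θ < b + 1 := by
    rw [div_lt_iff₀ hθ]
    linarith [(abs_lt.1 hzc).2]
  have hfloor : ⌊z / θ⌋ ≤ b := Int.floor_le_iff.2 hzb
  rw [q_of_nonneg θ hz, mul_comm θ]
  constructor
  · exact mul_nonneg (Int.cast_nonneg (Int.floor_nonneg.2 (div_nonneg hz hθ.le))) hθ.le
  · exact mul_le_mul_of_nonneg_right (Int.cast_le.2 hfloor) hθ.le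

/-- Truncation moves towards any multiple of `θ` within `θ` of the input, without overshooting. -/
lemma abs_q_add_abs_sub_q_le {θ z c : ℝ} (hθ : 0 < θ) (hc : c ∈ zmultiples θ)
    (hzc : |z - c| < θ) : |q θ z| + |c - q θ z| ≤ |c| := by
  wlog hz : 0 ≤ z generalizing z c
  · have := this (neg_mem hc) (by rwa [neg_sub_neg, abs_sub_comm]) (by linarith)
    rwa [q_neg, abs_neg, neg_sub_neg, abs_neg, abs_sub_comm] at this
  obtain ⟨hq0, hqc⟩ := q_mem_Icc_of_abs_sub_lt hθ hz hc hzc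
  rw [abs_of_nonneg hq0, abs_of_nonneg (sub_nonneg.2 hqc), abs_of_nonneg (hq0.trans hqc),
    add_sub_cancel]

lemma anorm_one_lt_iff {N : ℕ} {g : ℕ → ℝ} {c : ℝ} :
    anorm 1 N g < c ↔ ∀ n ≤ N, |∑ k ∈ range (n + 1), g k| < c := by
  simp [anorm, Finset.sup'_lt_iff]

lemma lifZ_one_eq (θ : ℝ) (f : ℕ → ℝ) (n : ℕ) :
    lifZ θ 1 f n = ∑ k ∈ range (n + 1), f k - ∑ k ∈ range n, q θ (lifZ θ 1 f k) := by
  induction n with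
  | zero => simp [lifZ]
  | succ n ih =>
    rw [lifZ, sum_range_succ f (n + 1), sum_range_succ (fun k => q θ (lifZ θ 1 f k)) n]
    linear_combination ih

lemma sum_sub_q_lifZ_one (θ : ℝ) (f : ℕ → ℝ) (n : ℕ) :
    ∑ k ∈ range (n + 1), (f k - q θ (lifZ θ 1 f k)) = lifZ θ 1 f n - q θ (lifZ θ 1 f n) := by
  rw [sum_sub_distrib, sum_range_succ (fun k => q θ (lifZ θ 1 f k)) n]
  linear_combination (lifZ_one_eq θ f n).symm

lemma anorm_one_sub_q_lifZ_lt {θ : ℝ} (hθ : 0 < θ) (N : ℕ) (f : ℕ → ℝ) :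
    anorm 1 N (fun k => f k - q θ (lifZ θ 1 f k)) < θ :=
  anorm_one_lt_iff.2 fun n _ => by
    rw [sum_sub_q_lifZ_one]
    exact abs_sub_q_lt hθ _

lemma sum_abs_q_lifZ_one_add_le {θ : ℝ} (hθ : 0 < θ) (f t : ℕ → ℝ) (n : ℕ)
    (ht : ∀ k < n, t k ∈ zmultiples θ)
    (hft : ∀ k < n, |∑ i ∈ range (k + 1), (f i - t i)| < θ) :
    ∑ k ∈ range n, |q θ (lifZ θ 1 f k)|
        + |∑ k ∈ range n, t k - ∑ k ∈ range n, q θ (lifZ θ 1 f k)|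
      ≤ ∑ k ∈ range n, |t k| := by
  induction n with
  | zero => simp
  | succ n ih =>
    simp only [sum_range_succ]
    set S := ∑ k ∈ range n, q θ (lifZ θ 1 f k)
    set T := ∑ k ∈ range n, t k
    have hlow := ih (fun k hk => ht k (by omega)) (fun k hk => hft k (by omega))
    have hS : S ∈ zmultiples θ := sum_mem fun k _ => q_mem_zmultiples θ _
    have hT : T ∈ zmultiples θ := sum_mem fun k hk => ht k ((mem_range.1 hk).trans n.lt_succ_self)
    have hc : T + t n - S ∈ zmultiples θ := sub_mem (add_mem hT (ht n n.lt_succ_self)) hS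
    have hzc : |lifZ θ 1 f n - (T + t n - S)| < θ := by
      have heq : lifZ θ 1 f n - (T + t n - S) = ∑ i ∈ range (n + 1), (f i - t i) := by
        rw [sum_sub_distrib, sum_range_succ t, lifZ_one_eq θ f n]
        ring
      exact heq ▸ hft n n.lt_succ_self
    have hstep := abs_q_add_abs_sub_q_le hθ hc hzc
    have htri : |T + t n - S| ≤ |T - S| + |t n| := by
      simpa only [add_sub_right_comm] using abs_add_le (T - S) (t n)
    rw [show T + t n - (S + q θ (lifZ θ 1 f n)) = T + t n - S - q θ (lifZ θ 1 f n) by ring]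
    linarith

theorem if_extremal_sparsity (θ : ℝ) (hθ : 0 < θ) (N : ℕ) (f : ℕ → ℝ) :
    IsLeast
      {x : ℝ | ∃ s : ℕ → ℝ, (∀ k ≤ N, ∃ m : ℤ, s k = θ * m) ∧
        anorm 1 N (fun k => f k - s k) < θ ∧
        x = ∑ k ∈ Finset.range (N + 1), |s k|}
      (∑ k ∈ Finset.range (N + 1), |q θ (lifZ θ 1 f k)|) := by
  refine ⟨⟨_, fun k _ => ?_, anorm_one_sub_q_lifZ_lt hθ N f, rfl⟩, ?_⟩
  · exact mem_zmultiples_iff_exists_mul.1 (q_mem_zmultiples θ _)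
  · rintro x ⟨t, ht, htf, rfl⟩
    have hbound := sum_abs_q_lifZ_one_add_le hθ f t (N + 1)
      (fun k hk => mem_zmultiples_iff_exists_mul.2 (ht k (by omega)))
      (fun k hk => anorm_one_lt_iff.1 htf k (by omega))
    exact (le_add_of_nonneg_right (abs_nonneg _)).trans hbound
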